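/- arXiv:2402.10998 — 9 statements merged into one kernel-verified Lean document; each statement's English description precedes it below -/
import Mathlib

section
/- (Safety Criterion, semantic form of Theorem 'Safety Criterion'/'Soundness') Let S be a type (the state space), let ctrl, plant, κ : S → S → Prop be relations, let φ, ψ, ζs : S → Prop and ζc : S → S → Prop. Assume: (1) totality of the controller description: for every s there exists t with κ s t; (2) envelope safety: for all s, t, if φ s and t is reachable from s under the reflexive-transitive closure of the composed relation ctrl;plant, then ψ t; (3) ζs is a state reachability formula: for all s, t, if φ s and t is reachable from s under the reflexive-transitive closure of ctrl;plant, then ζs t; (4) monitor correctness: for all s, t, ζc s t implies ctrl s t; (5) the verified NN property: for all s, t, if ζs s and κ s t then ζc s t. Then for all s, t, if φ s and t is reachable from s under the reflexive-transitive closure of the composed relation κ;plant, then ψ t and ζs t. -/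
/-- Sequential composition of relations: `s` steps to `t` via `R` then `Q`. -/
def relComp {S : Type*} (R Q : S → S → Prop) : S → S → Prop :=
  fun s t => ∃ u, R s u ∧ Q u t

/-- Safety Criterion (semantic form): if the abstract envelope contract is valid,
`ζs` is a state reachability formula, the monitor `ζc` is correct for `ctrl`,
the controller description `κ` is total, and the verified NN property holds,
then the `κ`-controlled system is safe and stays in `ζs`. -/
theorem safety_criterion {S : Type*}
    (ctrl plant κ : S → S → Prop)
    (φ ψ ζs : S → Prop) (ζc : S → S → Prop)
    (hTotal : ∀ s, ∃ t, κ s t)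
    (hEnv : ∀ s t, φ s → Relation.ReflTransGen (relComp ctrl plant) s t → ψ t)
    (hReach : ∀ s t, φ s → Relation.ReflTransGen (relComp ctrl plant) s t → ζs t)
    (hMon : ∀ s t, ζc s t → ctrl s t)
    (hNN : ∀ s t, ζs s → κ s t → ζc s t) :
    ∀ s t, φ s → Relation.ReflTransGen (relComp κ plant) s t → ψ t ∧ ζs t := by
  intro s t hφ hRT
  have key : Relation.ReflTransGen (relComp ctrl plant) s t := by
    induction hRT with
    | refl => exact Relation.ReflTransGen.refl
    | tail hsu hstep ih =>
      obtain ⟨v, hκ, hplant⟩ := hstep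
      exact ih.tail ⟨v, hMon _ _ (hNN _ _ (hReach _ _ hφ ih) hκ), hplant⟩
  exact ⟨hEnv _ _ hφ key, hReach _ _ hφ key⟩
end

section
/- (Soundness for a concrete controller function, semantic form of the main Soundness theorem) Let S be a type, ctrl, plant : S → S → Prop relations, φ, ψ, ζs : S → Prop, ζc : S → S → Prop, and let g : S → S be a function (the deterministic controller implemented by the neural network, acting on states). Assume: (1) envelope safety: for all s, t, if φ s and t is reachable from s under the reflexive-transitive closure of ctrl;plant, then ψ t; (2) ζs is a state reachability formula: for all s, t, if φ s and t is reachable from s under the reflexive-transitive closure of ctrl;plant, then ζs t; (3) monitor correctness: for all s, t, ζc s t implies ctrl s t; (4) the open-loop verification result: for every state s with ζs s, ζc s (g s) holds. Then for all s, t, if φ s and t is reachable from s under the reflexive-transitive closure of the composed relation (fun s t => t = g s);plant, then ψ t. -/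
/-- Soundness for a concrete controller function `g`: if the envelope contract is
valid, `ζs` is a state reachability formula, the monitor `ζc` is correct, and the
open-loop NN verification succeeded (`ζs s → ζc s (g s)`), then the closed-loop
system controlled by `g` is safe. -/
theorem soundness_concrete_controller {S : Type*}
    (ctrl plant : S → S → Prop)
    (φ ψ ζs : S → Prop) (ζc : S → S → Prop)
    (g : S → S)
    (hEnv : ∀ s t, φ s → Relation.ReflTransGen (relComp ctrl plant) s t → ψ t)
    (hReach : ∀ s t, φ s → Relation.ReflTransGen (relComp ctrl plant) s t → ζs t)
    (hMon : ∀ s t, ζc s t → ctrl s t)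
    (hNN : ∀ s, ζs s → ζc s (g s)) :
    ∀ s t, φ s →
      Relation.ReflTransGen (relComp (fun s t => t = g s) plant) s t → ψ t := by
  intro s t hφ h
  have key : Relation.ReflTransGen (relComp ctrl plant) s t := by
    induction h with
    | refl => exact Relation.ReflTransGen.refl
    | tail hab hbc ih =>
      rename_i b c
      obtain ⟨u, hu, hp⟩ := hbc
      subst hu
      exact ih.tail ⟨g b, hMon _ _ (hNN b (hReach s b hφ ih)), hp⟩
  exact hEnv s t hφ key
end

section
/- (Trace refinement, the inductive core of the Safety Criterion proof) Let S be a type, ctrl, plant, κ : S → S → Prop relations, φ, ζs : S → Prop, ζc : S → S → Prop. Assume: (1) ζs is a state reachability formula: for all s, t, if φ s and t is reachable from s under the reflexive-transitive closure of ctrl;plant, then ζs t; (2) monitor correctness: for all s, t, ζc s t implies ctrl s t; (3) for all s, t, if ζs s and κ s t then ζc s t. Then for all s, t, if φ s and t is reachable from s under the reflexive-transitive closure of κ;plant, then t is also reachable from s under the reflexive-transitive closure of ctrl;plant (i.e., the κ-controlled system refines the envelope-controlled system on reachable states). -/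
/-- Trace refinement: on reachable states, the `κ`-controlled system refines
the envelope-controlled system. -/
theorem trace_refinement {S : Type*}
    (ctrl plant κ : S → S → Prop)
    (φ ζs : S → Prop) (ζc : S → S → Prop)
    (hReach : ∀ s t, φ s → Relation.ReflTransGen (relComp ctrl plant) s t → ζs t)
    (hMon : ∀ s t, ζc s t → ctrl s t)
    (hNN : ∀ s t, ζs s → κ s t → ζc s t) :
    ∀ s t, φ s → Relation.ReflTransGen (relComp κ plant) s t →
      Relation.ReflTransGen (relComp ctrl plant) s t := by
  intro s t hφ h
  induction h with
  | refl => exact Relation.ReflTransGen.refl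
  | tail _ hbc ih =>
    obtain ⟨u, hκ, hp⟩ := hbc
    exact ih.tail ⟨u, hMon _ _ (hNN _ _ (hReach s _ hφ ih) hκ), hp⟩
end

section
/- (Range Restriction, semantic form) Let S be a type, ctrl, plant : S → S → Prop relations, and φ, ψ, R : S → Prop. Assume the contract is valid: for all s, t, if φ s and t is reachable from s under the reflexive-transitive closure of ctrl;plant, then ψ t. Define the range-restricted plant plantR by plantR u v := plant u v ∧ R v. Then: (a) for all s, t, if φ s ∧ R s and t is reachable from s under the reflexive-transitive closure of ctrl;plantR, then ψ t; and (b) R is an invariant of the restricted system: for all s, t, if φ s ∧ R s and t is reachable from s under the reflexive-transitive closure of ctrl;plantR, then R t. -/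
section RangeRestriction

variable {S : Type*}

def rangeRestrict (Q : S → S → Prop) (R : S → Prop) : S → S → Prop :=
  fun u v => Q u v ∧ R v

theorem rangeRestrict_le (Q : S → S → Prop) (R : S → Prop) : rangeRestrict Q R ≤ Q :=
  fun _ _ h => h.1

theorem relComp_mono_right (P : S → S → Prop) {Q Q' : S → S → Prop} (h : Q ≤ Q') :
    relComp P Q ≤ relComp P Q' :=
  fun _ _ ⟨u, hP, hQ⟩ => ⟨u, hP, h u _ hQ⟩

theorem relComp_rangeRestrict_target {P Q : S → S → Prop} {R : S → Prop} {s t : S}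
    (h : relComp P (rangeRestrict Q R) s t) : R t :=
  h.choose_spec.2.2

theorem Relation.ReflTransGen.of_forall_target {r : S → S → Prop} {p : S → Prop}
    (hr : ∀ a b, r a b → p b) {a b : S} (ha : p a) (h : Relation.ReflTransGen r a b) : p b := by
  rcases h.cases_tail with rfl | ⟨c, -, hcb⟩
  · exact ha
  · exact hr c b hcb

end RangeRestriction

/-- Range Restriction (semantic form): restricting the plant with a range check
`?R` preserves the safety contract and makes `R` an invariant. -/
theorem range_restriction {S : Type*}
    (ctrl plant : S → S → Prop)
    (φ ψ R : S → Prop)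
    (hC : ∀ s t, φ s → Relation.ReflTransGen (relComp ctrl plant) s t → ψ t) :
    (∀ s t, φ s ∧ R s →
        Relation.ReflTransGen (relComp ctrl (fun u v => plant u v ∧ R v)) s t → ψ t)
    ∧
    (∀ s t, φ s ∧ R s →
        Relation.ReflTransGen (relComp ctrl (fun u v => plant u v ∧ R v)) s t → R t) := by
  have hsub : relComp ctrl (rangeRestrict plant R) ≤ relComp ctrl plant :=
    relComp_mono_right ctrl (rangeRestrict_le plant R)
  refine ⟨fun s t hs hst => hC s t hs.1 (Relation.ReflTransGen.mono hsub s t hst),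
    fun s t hs hst => ?_⟩
  exact hst.of_forall_target (fun _ _ => relComp_rangeRestrict_target) hs.2
end

section
/- (Counterexample regions exist: ReLU networks are locally affine on polyhedral regions) Let g : (Fin n → ℝ) → (Fin m → ℝ) be a ReLU network, i.e., a function expressible as a finite alternating composition g = A_L ∘ ρ ∘ A_{L-1} ∘ ⋯ ∘ ρ ∘ A_0, where each A_k is an affine map between real coordinate spaces of appropriate dimensions and ρ applies x ↦ max x 0 to each coordinate. Then for every input z₀ there exist finitely many affine functionals h_1, …, h_r : (Fin n → ℝ) → ℝ and an affine map ω : (Fin n → ℝ) → (Fin m → ℝ) such that z₀ lies in the polyhedron ι = {z | ∀ j, h_j z ≥ 0} and g z = ω z for every z ∈ ι. -/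
/-- An affine map between real coordinate spaces, given by a matrix and a bias. -/
def IsAffineMapMat {a b : ℕ} (f : (Fin a → ℝ) → (Fin b → ℝ)) : Prop :=
  ∃ (M : Matrix (Fin b) (Fin a) ℝ) (c : Fin b → ℝ), ∀ z, f z = M.mulVec z + c

/-- An affine functional on a real coordinate space. -/
def IsAffineFunctional {a : ℕ} (f : (Fin a → ℝ) → ℝ) : Prop :=
  ∃ (w : Fin a → ℝ) (c : ℝ), ∀ z, f z = (∑ i, w i * z i) + c

/-- Componentwise ReLU activation. -/
def reluVec {k : ℕ} (x : Fin k → ℝ) : Fin k → ℝ := fun i => max (x i) 0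

/-- A ReLU network: a finite alternating composition
`A_L ∘ ρ ∘ A_{L-1} ∘ ⋯ ∘ ρ ∘ A_0` of affine maps and componentwise ReLU. -/
inductive IsReLUNet : {a b : ℕ} → ((Fin a → ℝ) → (Fin b → ℝ)) → Prop where
  | affine {a b : ℕ} {A : (Fin a → ℝ) → (Fin b → ℝ)} (h : IsAffineMapMat A) :
      IsReLUNet A
  | step {a b c : ℕ} {A : (Fin a → ℝ) → (Fin b → ℝ)} {g : (Fin b → ℝ) → (Fin c → ℝ)}
      (hA : IsAffineMapMat A) (hg : IsReLUNet g) :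
      IsReLUNet (fun z => g (reluVec (A z)))

lemma affineFunctional_comp {a b : ℕ} {f : (Fin b → ℝ) → ℝ} {B : (Fin a → ℝ) → (Fin b → ℝ)}
    (hf : IsAffineFunctional f) (hB : IsAffineMapMat B) :
    IsAffineFunctional (fun z => f (B z)) := by
  obtain ⟨w, c, hw⟩ := hf
  obtain ⟨M, d, hM⟩ := hB
  refine ⟨fun j => ∑ i, w i * M i j, (∑ i, w i * d i) + c, fun z => ?_⟩
  simp only [hw, hM, Matrix.mulVec, dotProduct, Pi.add_apply, mul_add,
    Finset.mul_sum, Finset.sum_add_distrib, Finset.sum_mul]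
  rw [Finset.sum_comm]
  ring_nf

lemma affineMapMat_comp {a b c : ℕ} {f : (Fin b → ℝ) → (Fin c → ℝ)} {B : (Fin a → ℝ) → (Fin b → ℝ)}
    (hf : IsAffineMapMat f) (hB : IsAffineMapMat B) :
    IsAffineMapMat (fun z => f (B z)) := by
  obtain ⟨M, d, hM⟩ := hf
  obtain ⟨N, e, hN⟩ := hB
  refine ⟨M * N, M.mulVec e + d, fun z => ?_⟩
  simp [hM, hN, Matrix.mulVec_add, ← Matrix.mulVec_mulVec, add_assoc]

lemma relu_locally_affine_aux {a b : ℕ} (g : (Fin a → ℝ) → (Fin b → ℝ)) (hg : IsReLUNet g) :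
    ∀ z₀ : Fin a → ℝ,
    ∃ (r : ℕ) (h : Fin r → (Fin a → ℝ) → ℝ) (ω : (Fin a → ℝ) → (Fin b → ℝ)),
      (∀ j, IsAffineFunctional (h j)) ∧ IsAffineMapMat ω ∧
      (∀ j, h j z₀ ≥ 0) ∧
      (∀ z, (∀ j, h j z ≥ 0) → g z = ω z) := by
  induction hg with
  | affine h =>
      intro z₀
      exact ⟨0, Fin.elim0, _, (fun j => j.elim0), h, fun j => j.elim0, fun z _ => rfl⟩
  | @step a b c A g hA hg ih =>
      intro z₀
      obtain ⟨M, d, hM⟩ := hA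
      set B : (Fin a → ℝ) → (Fin b → ℝ) :=
        fun z i => if 0 ≤ A z₀ i then A z i else 0 with hBdef
      have hBaff : IsAffineMapMat B := by
        refine ⟨fun i j => if 0 ≤ A z₀ i then M i j else 0,
          fun i => if 0 ≤ A z₀ i then d i else 0, fun z => ?_⟩
        funext i
        by_cases h : 0 ≤ A z₀ i
        · simp only [hBdef, if_pos h, Pi.add_apply, Matrix.mulVec, dotProduct]
          rw [hM]; simp [Matrix.mulVec, dotProduct]
        · simp only [hBdef, if_neg h, Pi.add_apply, Matrix.mulVec, dotProduct]
          simp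
      set k : Fin b → (Fin a → ℝ) → ℝ :=
        fun i z => if 0 ≤ A z₀ i then A z i else -(A z i) with hkdef
      have hkaff : ∀ i, IsAffineFunctional (k i) := by
        intro i
        by_cases h : 0 ≤ A z₀ i
        · refine ⟨M i, d i, fun z => ?_⟩
          show (if 0 ≤ A z₀ i then A z i else -(A z i)) = _
          rw [if_pos h, hM]; simp [Matrix.mulVec, dotProduct]
        · refine ⟨-(M i), -(d i), fun z => ?_⟩
          show (if 0 ≤ A z₀ i then A z i else -(A z i)) = _
          rw [if_neg h, hM]
          simp [Matrix.mulVec, dotProduct, neg_add, neg_mul]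
          ring
      have hBrelu : ∀ z, (∀ i, k i z ≥ 0) → reluVec (A z) = B z := by
        intro z hz
        funext i
        have := hz i
        by_cases h : 0 ≤ A z₀ i <;> simp [hkdef, h] at this <;>
          simp [reluVec, hBdef, h]
        · exact this
        · linarith
      have hBz₀ : B z₀ = reluVec (A z₀) := by
        funext i; by_cases h : 0 ≤ A z₀ i <;> simp [hBdef, reluVec, h]
        linarith
      obtain ⟨r', h', ω', h'aff, ω'aff, h'z₀, h'eq⟩ := ih (reluVec (A z₀))
      refine ⟨b + r', Fin.append k (fun j z => h' j (B z)), fun z => ω' (B z),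
        ?_, affineMapMat_comp ω'aff hBaff, ?_, ?_⟩
      · intro j
        refine Fin.addCases (fun i => ?_) (fun i => ?_) j
        · simpa using hkaff i
        · simpa using affineFunctional_comp (h'aff i) hBaff
      · intro j
        refine Fin.addCases (fun i => ?_) (fun i => ?_) j
        · simp only [Fin.append_left]
          by_cases h : 0 ≤ A z₀ i <;> simp [hkdef, h]
          linarith
        · simp only [Fin.append_right]
          rw [hBz₀]; exact h'z₀ i
      · intro z hz
        have hk : ∀ i, k i z ≥ 0 := fun i => by simpa using hz (Fin.castAdd r' i)
        show g (reluVec (A z)) = ω' (B z)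
        rw [hBrelu z hk]
        apply h'eq
        intro j
        simpa using hz (Fin.natAdd b j)

/-- Counterexample regions exist: a ReLU network is locally affine on a
polyhedral region around every input point. -/
theorem relu_locally_affine {n m : ℕ}
    (g : (Fin n → ℝ) → (Fin m → ℝ)) (hg : IsReLUNet g) (z₀ : Fin n → ℝ) :
    ∃ (r : ℕ) (h : Fin r → (Fin n → ℝ) → ℝ) (ω : (Fin n → ℝ) → (Fin m → ℝ)),
      (∀ j, IsAffineFunctional (h j)) ∧ IsAffineMapMat ω ∧
      (∀ j, h j z₀ ≥ 0) ∧
      (∀ z, (∀ j, h j z ≥ 0) → g z = ω z) := by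
  exact relu_locally_affine_aux g hg z₀
end

section
/- (Upper bound for multivariate max) Let n be a natural number, let f, g : (Fin n → ℝ) → ℝ be affine maps, and let B be a set of points in Fin n → ℝ. Let x_f, x_g ∈ B satisfy the maximizer properties: for all x ∈ B, f x − g x ≤ f x_f − g x_f and g x − f x ≤ g x_g − f x_g. Assume f x_f − g x_f > 0 and g x_g − f x_g > 0. Set γ := f x_f − f x_g − g x_f + g x_g (so γ = (f x_f − g x_f) + (g x_g − f x_g) > 0), μ := (f x_f − g x_f)/γ, and c := ((f x_f − g x_f)·(g x_g − f x_g))/γ. Then for all x ∈ B: max (f x) (g x) ≤ μ · f x + (1 − μ) · g x + c. -/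
/-- Upper bound for multivariate max: the shifted convex mixture
`μ f + (1 - μ) g + c` dominates `max f g` on `B`. -/
theorem max_upper_bound {n : ℕ}
    (f g : (Fin n → ℝ) → ℝ)
    (hf : IsAffineFunctional f) (hg : IsAffineFunctional g)
    (B : Set (Fin n → ℝ)) (xf xg : Fin n → ℝ)
    (hxf : xf ∈ B) (hxg : xg ∈ B)
    (hmaxf : ∀ x ∈ B, f x - g x ≤ f xf - g xf)
    (hmaxg : ∀ x ∈ B, g x - f x ≤ g xg - f xg)
    (hposf : f xf - g xf > 0) (hposg : g xg - f xg > 0)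
    (γ μ c : ℝ)
    (hγ : γ = f xf - f xg - g xf + g xg)
    (hμ : μ = (f xf - g xf) / γ)
    (hc : c = ((f xf - g xf) * (g xg - f xg)) / γ) :
    ∀ x ∈ B, max (f x) (g x) ≤ μ * f x + (1 - μ) * g x + c := by
  intro x hx
  have hγ0 : γ > 0 := by rw [hγ]; linarith
  have hne : γ ≠ 0 := ne_of_gt hγ0
  have hd := hmaxf x hx
  have hd' := hmaxg x hx
  apply max_le
  · rw [← sub_nonneg, hμ, hc]
    have h : μ * f x + (1 - μ) * g x + c - f x =
      ((g xg - f xg) * ((f xf - g xf) - (f x - g x))) / γ := by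
      rw [hμ, hc]; field_simp; rw [hγ]; ring
    rw [← hμ, ← hc, h]
    apply div_nonneg (mul_nonneg (by linarith) (by linarith)) (le_of_lt hγ0)
  · rw [← sub_nonneg, hμ, hc]
    have h : μ * f x + (1 - μ) * g x + c - g x =
      ((f xf - g xf) * ((g xg - f xg) - (g x - f x))) / γ := by
      rw [hμ, hc]; field_simp; rw [hγ]; ring
    rw [← hμ, ← hc, h]
    apply div_nonneg (mul_nonneg (by linarith) (by linarith)) (le_of_lt hγ0)
end

section
/- (Lower half of the max upper bound: the mixture dominates g) Let n be a natural number, f, g : (Fin n → ℝ) → ℝ functions, B a set of points, and x_f, x_g ∈ B with: for all x ∈ B, g x − f x ≤ g x_g − f x_g; and f x_f − g x_f > 0 and g x_g − f x_g > 0. Set γ := f x_f − f x_g − g x_f + g x_g, μ := (f x_f − g x_f)/γ, and c := ((f x_f − g x_f)·(g x_g − f x_g))/γ. Then for all x ∈ B: g x ≤ μ · f x + (1 − μ) · g x + c. -/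
/-- Lower half of the max upper bound: the mixture dominates `g` on `B`. -/
theorem mixture_dominates_g {n : ℕ}
    (f g : (Fin n → ℝ) → ℝ)
    (B : Set (Fin n → ℝ)) (xf xg : Fin n → ℝ)
    (hxf : xf ∈ B) (hxg : xg ∈ B)
    (hmaxg : ∀ x ∈ B, g x - f x ≤ g xg - f xg)
    (hposf : f xf - g xf > 0) (hposg : g xg - f xg > 0)
    (γ μ c : ℝ)
    (hγ : γ = f xf - f xg - g xf + g xg)
    (hμ : μ = (f xf - g xf) / γ)
    (hc : c = ((f xf - g xf) * (g xg - f xg)) / γ) :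
    ∀ x ∈ B, g x ≤ μ * f x + (1 - μ) * g x + c := by
  intro x hx
  have h1 := hmaxg x hx
  have hγpos : 0 < γ := by rw [hγ]; linarith
  rw [← sub_nonneg]
  have hne : γ ≠ 0 := ne_of_gt hγpos
  have heq : μ * f x + (1 - μ) * g x + c - g x
      = ((f xf - g xf) * (f x - g x + (g xg - f xg))) / γ := by
    rw [hμ, hc]; field_simp; ring
  rw [heq]
  apply div_nonneg _ hγpos.le
  apply mul_nonneg hposf.le
  linarith
end

section
/- (Upper half of the max upper bound: the mixture dominates f) Let n be a natural number, f, g : (Fin n → ℝ) → ℝ functions, B a set of points, and x_f, x_g ∈ B with: for all x ∈ B, g x − f x ≤ g x_g − f x_g and f x − g x ≤ f x_f − g x_f; and f x_f − g x_f > 0 and g x_g − f x_g > 0. Set γ := f x_f − f x_g − g x_f + g x_g, μ := (f x_f − g x_f)/γ, and c := ((f x_f − g x_f)·(g x_g − f x_g))/γ. Then for all x ∈ B: f x ≤ μ · f x + (1 − μ) · g x + c. -/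
/-- Upper half of the max upper bound: the mixture dominates `f` on `B`. -/
theorem mixture_dominates_f {n : ℕ}
    (f g : (Fin n → ℝ) → ℝ)
    (B : Set (Fin n → ℝ)) (xf xg : Fin n → ℝ)
    (hxf : xf ∈ B) (hxg : xg ∈ B)
    (hmaxg : ∀ x ∈ B, g x - f x ≤ g xg - f xg)
    (hmaxf : ∀ x ∈ B, f x - g x ≤ f xf - g xf)
    (hposf : f xf - g xf > 0) (hposg : g xg - f xg > 0)
    (γ μ c : ℝ)
    (hγ : γ = f xf - f xg - g xf + g xg)
    (hμ : μ = (f xf - g xf) / γ)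
    (hc : c = ((f xf - g xf) * (g xg - f xg)) / γ) :
    ∀ x ∈ B, f x ≤ μ * f x + (1 - μ) * g x + c := by
  intro x hx
  have hγpos : γ > 0 := by rw [hγ]; linarith
  have key : (g xg - f xg) * (f x - g x) ≤ (f xf - g xf) * (g xg - f xg) := by
    have := hmaxf x hx
    nlinarith [hposg]
  rw [← sub_nonneg]
  have hne := hγpos.ne'
  have heq : μ * f x + (1 - μ) * g x + c - f x =
      ((g xg - f xg) * (g x - f x) + (f xf - g xf) * (g xg - f xg)) / γ := by
    subst hγ hμ hc; field_simp; ring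
  rw [heq]
  apply div_nonneg _ hγpos.le
  nlinarith [key]
end

section
/- (Model-set inclusion for the max overapproximation) Let n be a natural number, f, g : (Fin n → ℝ) → ℝ affine maps, B a set of points, and x_f, x_g ∈ B maximizers: for all x ∈ B, f x − g x ≤ f x_f − g x_f and g x − f x ≤ g x_g − f x_g, with f x_f − g x_f > 0 and g x_g − f x_g > 0. Set γ := f x_f − f x_g − g x_f + g x_g, μ := (f x_f − g x_f)/γ, and c := ((f x_f − g x_f)·(g x_g − f x_g))/γ. Then {x ∈ B | max (f x) (g x) > 0} ⊆ {x ∈ B | μ · f x + (1 − μ) · g x + c > 0}; i.e., replacing the constraint max(f, g) > 0 by the linear constraint μ f + (1−μ) g + c > 0 yields an overapproximation of the constraint's model set within B. -/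
/-! With `a := f x_f - g x_f` and `b := g x_g - f x_g` we have `γ = a + b`, and the linear
constraint is `(a f + b g + a b) / (a + b) > 0`. On `B`, `g ≥ f - a` and `f ≥ g - b`; so if
`f > 0` then `a f + b g + a b = a f + b (g + a) ≥ a f + b f > 0`, and symmetrically if `g > 0`. -/

lemma shifted_mul_add_pos_of_max_pos {a b u v : ℝ} (ha : 0 < a) (hb : 0 < b)
    (hu : u - v ≤ a) (hv : v - u ≤ b) (h : 0 < max u v) : 0 < a * u + b * v + a * b := by
  rcases lt_max_iff.mp h with hu₀ | hv₀
  · have hva : 0 < v + a := by linarith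
    nlinarith [mul_pos ha hu₀, mul_pos hb hva]
  · have hub : 0 < u + b := by linarith
    nlinarith [mul_pos hb hv₀, mul_pos ha hub]

lemma shifted_convex_combination_eq {a b u v : ℝ} (hab : a + b ≠ 0) :
    a / (a + b) * u + (1 - a / (a + b)) * v + a * b / (a + b)
      = (a * u + b * v + a * b) / (a + b) := by
  field_simp
  ring

lemma shifted_convex_combination_pos_of_max_pos {a b u v : ℝ} (ha : 0 < a) (hb : 0 < b)
    (hu : u - v ≤ a) (hv : v - u ≤ b) (h : 0 < max u v) :
    0 < a / (a + b) * u + (1 - a / (a + b)) * v + a * b / (a + b) := by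
  have hab : 0 < a + b := add_pos ha hb
  rw [shifted_convex_combination_eq hab.ne']
  exact div_pos (shifted_mul_add_pos_of_max_pos ha hb hu hv h) hab

theorem max_overapprox_model_inclusion_general {n : ℕ}
    (f g : (Fin n → ℝ) → ℝ)
    (B : Set (Fin n → ℝ)) (xf xg : Fin n → ℝ)
    (hmaxf : ∀ x ∈ B, f x - g x ≤ f xf - g xf)
    (hmaxg : ∀ x ∈ B, g x - f x ≤ g xg - f xg)
    (hposf : f xf - g xf > 0) (hposg : g xg - f xg > 0)
    (γ μ c : ℝ)
    (hγ : γ = f xf - f xg - g xf + g xg)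
    (hμ : μ = (f xf - g xf) / γ)
    (hc : c = ((f xf - g xf) * (g xg - f xg)) / γ) :
    {x ∈ B | max (f x) (g x) > 0} ⊆ {x ∈ B | μ * f x + (1 - μ) * g x + c > 0} := by
  rintro x ⟨hxB, hmax⟩
  refine ⟨hxB, ?_⟩
  have hγ_sum : γ = (f xf - g xf) + (g xg - f xg) := by rw [hγ]; ring
  rw [hμ, hc, hγ_sum]
  exact shifted_convex_combination_pos_of_max_pos hposf hposg (hmaxf x hxB) (hmaxg x hxB) hmax

/-- Model-set inclusion for the max overapproximation: replacing
`max (f x) (g x) > 0` by the linear constraint `μ f + (1 - μ) g + c > 0`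
overapproximates the model set within `B`. -/
theorem max_overapprox_model_inclusion {n : ℕ}
    (f g : (Fin n → ℝ) → ℝ)
    (hf : IsAffineFunctional f) (hg : IsAffineFunctional g)
    (B : Set (Fin n → ℝ)) (xf xg : Fin n → ℝ)
    (hxf : xf ∈ B) (hxg : xg ∈ B)
    (hmaxf : ∀ x ∈ B, f x - g x ≤ f xf - g xf)
    (hmaxg : ∀ x ∈ B, g x - f x ≤ g xg - f xg)
    (hposf : f xf - g xf > 0) (hposg : g xg - f xg > 0)
    (γ μ c : ℝ)
    (hγ : γ = f xf - f xg - g xf + g xg)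
    (hμ : μ = (f xf - g xf) / γ)
    (hc : c = ((f xf - g xf) * (g xg - f xg)) / γ) :
    {x ∈ B | max (f x) (g x) > 0} ⊆ {x ∈ B | μ * f x + (1 - μ) * g x + c > 0} :=
  max_overapprox_model_inclusion_general f g B xf xg hmaxf hmaxg hposf hposg γ μ c hγ hμ hc
end
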